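/- Let c and n be positive integers and y = (c,c,…,c) ∈ ℕ^n the constant list. Then the set of invariant parking sequences for y equals the set of invariant parking assortments for y: PS^inv_n(y) = PA^inv_n(y). -/

import Mathlib

open Classical in
/-- One car attempts to park on a one-way street with spots `1, …, m`: given the set
`occ` of occupied spots, the car with preference `p` and length `l` parks in spots
`j, j+1, …, j+l-1` for the least `j ≥ p` such that these spots all exist (are `≤ m`)
and are unoccupied; returns the new set of occupied spots, or `none` if parking fails. -/
noncomputable def parkOne (m : ℕ) (occ : Finset ℕ) (p l : ℕ) : Option (Finset ℕ) :=
  if h : ∃ j, p ≤ j ∧ j + l ≤ m + 1 ∧ ∀ k ∈ Finset.Ico j (j + l), k ∉ occ then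
    some (occ ∪ Finset.Ico (Nat.find h) (Nat.find h + l))
  else none

/-- Run the parking-assortment process for the cars `(preference, length)` in order. -/
noncomputable def parkList (m : ℕ) : List (ℕ × ℕ) → Finset ℕ → Option (Finset ℕ)
  | [], occ => some occ
  | c :: rest, occ => (parkOne m occ c.1 c.2).bind (parkList m rest)

/-- `x` is a parking assortment for the list of car lengths `y`. -/
def IsPA (y x : List ℕ) : Prop :=
  x.length = y.length ∧ (∀ a ∈ x, 1 ≤ a ∧ a ≤ y.sum) ∧
    (parkList y.sum (x.zip y) ∅).isSome

/-- `PA y` is the set of parking assortments for `y`. -/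
def PA (y : List ℕ) : Set (List ℕ) := {x | IsPA y x}

/-- `PAinv y` is the set of (permutation-)invariant parking assortments for `y`:
those preference lists all of whose rearrangements are parking assortments for `y`. -/
def PAinv (y : List ℕ) : Set (List ℕ) := {x | ∀ x', x'.Perm x → IsPA y x'}

/-- `y` is minimally invariant if the all-ones list is the only invariant
parking assortment for `y`. -/
def MinInv (y : List ℕ) : Prop := PAinv y = {List.replicate y.length 1}

open Classical in
/-- One car attempts to park under parking-sequence rules: it locates the least
unoccupied spot `j ≥ p` (with `j ≤ m`) and parks in `j, …, j+l-1` only if these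
spots all exist and are unoccupied; otherwise parking fails. -/
noncomputable def parkOneSeq (m : ℕ) (occ : Finset ℕ) (p l : ℕ) : Option (Finset ℕ) :=
  if h : ∃ j, p ≤ j ∧ j ≤ m ∧ j ∉ occ then
    if Nat.find h + l ≤ m + 1 ∧ ∀ k ∈ Finset.Ico (Nat.find h) (Nat.find h + l), k ∉ occ then
      some (occ ∪ Finset.Ico (Nat.find h) (Nat.find h + l))
    else none
  else none

/-- Run the parking-sequence process for the cars `(preference, length)` in order. -/
noncomputable def parkListSeq (m : ℕ) : List (ℕ × ℕ) → Finset ℕ → Option (Finset ℕ)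
  | [], occ => some occ
  | c :: rest, occ => (parkOneSeq m occ c.1 c.2).bind (parkListSeq m rest)

/-- `x` is a parking sequence for the list of car lengths `y`. -/
def IsPS (y x : List ℕ) : Prop :=
  x.length = y.length ∧ (∀ a ∈ x, 1 ≤ a ∧ a ≤ y.sum) ∧
    (parkListSeq y.sum (x.zip y) ∅).isSome

/-- `PSinv y` is the set of (permutation-)invariant parking sequences for `y`. -/
def PSinv (y : List ℕ) : Set (List ℕ) := {x | ∀ x', x'.Perm x → IsPS y x'}


/-!
For a car of positive length the two rules agree as soon as the first free spot at or after its
preference starts a free block long enough for it; in particular every parking sequence is a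
parking assortment.

Conversely, let `x` be an invariant parking assortment for constant length `c`. Rearranging `x`
so that a car with preference `p` comes first, that car parks on `[p, p + c)`; the street is then
filled completely and the spots below `p` are covered by whole cars, so `p ≡ 1 (mod c)`. Once
every preference is the first spot of a slot `[t c + 1, t c + c]`, every slot stays either full or
empty, so the first free spot any car finds starts a free slot and the two rules coincide.
-/

open Finset

section SingleCar

variable {m p l : ℕ} {occ occ' : Finset ℕ}

theorem parkOne_eq_some_iff :
    parkOne m occ p l = some occ' ↔
      ∃ j, IsLeast {j | p ≤ j ∧ j + l ≤ m + 1 ∧ ∀ k ∈ Ico j (j + l), k ∉ occ} j ∧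
        occ' = occ ∪ Ico j (j + l) := by
  unfold parkOne
  split_ifs with h
  · refine ⟨fun hocc => ⟨_, Nat.isLeast_find h, (Option.some_injective _ hocc).symm⟩, ?_⟩
    rintro ⟨j, hj, rfl⟩
    rw [hj.unique (Nat.isLeast_find h)]
  · simp only [false_iff, not_exists, not_and]
    exact fun j hj _ => h ⟨j, hj.1⟩

theorem parkOneSeq_eq_some_iff :
    parkOneSeq m occ p l = some occ' ↔
      ∃ j, IsLeast {j | p ≤ j ∧ j ≤ m ∧ j ∉ occ} j ∧ j + l ≤ m + 1 ∧
        (∀ k ∈ Ico j (j + l), k ∉ occ) ∧ occ' = occ ∪ Ico j (j + l) := by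
  unfold parkOneSeq
  split_ifs with h hfit
  · refine ⟨fun hocc => ⟨_, Nat.isLeast_find h, hfit.1, hfit.2,
      (Option.some_injective _ hocc).symm⟩, ?_⟩
    rintro ⟨j, hj, -, -, rfl⟩
    rw [hj.unique (Nat.isLeast_find h)]
  · simp only [false_iff, not_exists, not_and]
    intro j hj hjm hfree _
    rw [hj.unique (Nat.isLeast_find h)] at hjm hfree
    exact hfit ⟨hjm, hfree⟩
  · simp only [false_iff, not_exists, not_and]
    exact fun j hj => absurd ⟨j, hj.1⟩ h

theorem parkOne_eq_some_of_parkOneSeq_eq_some (hl : 0 < l)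
    (h : parkOneSeq m occ p l = some occ') : parkOne m occ p l = some occ' := by
  obtain ⟨j, hj, hjm, hfree, rfl⟩ := parkOneSeq_eq_some_iff.mp h
  refine parkOne_eq_some_iff.mpr ⟨j, ⟨⟨hj.1.1, hjm, hfree⟩, ?_⟩, rfl⟩
  rintro j' ⟨hpj', hj'm, hfree'⟩
  exact hj.2 ⟨hpj', by omega, hfree' j' (by simp [hl])⟩

theorem parkOneSeq_eq_parkOne (hl : 0 < l)
    (hfit : ∀ j, IsLeast {j | p ≤ j ∧ j ≤ m ∧ j ∉ occ} j →
      j + l ≤ m + 1 ∧ ∀ k ∈ Ico j (j + l), k ∉ occ) :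
    parkOneSeq m occ p l = parkOne m occ p l := by
  classical
  by_cases hex : ∃ j, p ≤ j ∧ j ≤ m ∧ j ∉ occ
  · obtain ⟨hjm, hfree⟩ := hfit _ (Nat.isLeast_find hex)
    have hseq := parkOneSeq_eq_some_iff.mpr ⟨_, Nat.isLeast_find hex, hjm, hfree, rfl⟩
    rw [hseq, parkOne_eq_some_of_parkOneSeq_eq_some hl hseq]
  · have hpa : ¬ ∃ j, p ≤ j ∧ j + l ≤ m + 1 ∧ ∀ k ∈ Ico j (j + l), k ∉ occ := by
      rintro ⟨j, hpj, hjm, hfree⟩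
      exact hex ⟨j, hpj, by omega, hfree j (by simp [hl])⟩
    unfold parkOneSeq parkOne
    rw [dif_neg hex, dif_neg hpa]

theorem subset_of_parkOne_eq_some (h : parkOne m occ p l = some occ') : occ ⊆ occ' := by
  obtain ⟨j, -, rfl⟩ := parkOne_eq_some_iff.mp h
  exact subset_union_left

theorem card_of_parkOne_eq_some (h : parkOne m occ p l = some occ') :
    occ'.card = occ.card + l := by
  obtain ⟨j, hj, rfl⟩ := parkOne_eq_some_iff.mp h
  rw [card_union_of_disjoint (disjoint_right.mpr hj.1.2.2), Nat.card_Ico, Nat.add_sub_cancel_left]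

theorem subset_Icc_of_parkOne_eq_some (hp : 1 ≤ p) (hocc : occ ⊆ Icc 1 m)
    (h : parkOne m occ p l = some occ') : occ' ⊆ Icc 1 m := by
  obtain ⟨j, hj, rfl⟩ := parkOne_eq_some_iff.mp h
  refine union_subset hocc fun k hk => ?_
  have := hj.1
  simp only [Set.mem_ofPred_eq, mem_Ico, mem_Icc] at this hk ⊢
  omega

/-- A car of length `c` parking away from an occupied spot `a` lies entirely on one side of it,
so it changes the number of occupied spots below `a` by `0` or `c`. -/
theorem dvd_card_inter_Iio_of_parkOne_eq_some {a c : ℕ} (ha : a ∈ occ)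
    (hdvd : c ∣ (occ ∩ Iio a).card) (h : parkOne m occ p c = some occ') :
    c ∣ (occ' ∩ Iio a).card := by
  obtain ⟨j, hj, rfl⟩ := parkOne_eq_some_iff.mp h
  have hfree := hj.1.2.2
  rw [union_inter_distrib_right, card_union_of_disjoint
    ((disjoint_right.mpr hfree).mono inter_subset_left inter_subset_left)]
  refine dvd_add hdvd ?_
  by_cases hja : j < a
  · have hblock : Ico j (j + c) ⊆ Iio a := fun k hk => by
      have hak : a ∉ Ico j (j + c) := fun h' => hfree a h' ha
      simp only [mem_Ico, mem_Iio] at hk hak ⊢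
      omega
    rw [inter_eq_left.mpr hblock, Nat.card_Ico, Nat.add_sub_cancel_left]
  · have : Ico j (j + c) ∩ Iio a = ∅ := by
      ext k
      simp only [mem_inter, mem_Ico, mem_Iio, notMem_empty, iff_false]
      omega
    rw [this, card_empty]
    exact dvd_zero c

end SingleCar

section CarList

variable {m : ℕ}

theorem parkList_eq_some_of_parkListSeq_eq_some :
    ∀ {L : List (ℕ × ℕ)} {occ F : Finset ℕ}, (∀ q ∈ L, 0 < q.2) →
      parkListSeq m L occ = some F → parkList m L occ = some F
  | [], _, _, _, h => h
  | q :: L, _, _, hL, h => by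
    obtain ⟨occ', hq, hL'⟩ := Option.bind_eq_some_iff.mp h
    rw [parkList, parkOne_eq_some_of_parkOneSeq_eq_some (hL q List.mem_cons_self) hq]
    exact parkList_eq_some_of_parkListSeq_eq_some
      (fun q' hq' => hL q' (List.mem_cons_of_mem q hq')) hL'

theorem IsPS.isPA {y x : List ℕ} (hy : ∀ l ∈ y, 0 < l) (hx : IsPS y x) : IsPA y x := by
  obtain ⟨hlen, hbound, hpark⟩ := hx
  obtain ⟨F, hF⟩ := Option.isSome_iff_exists.mp hpark
  refine ⟨hlen, hbound, ?_⟩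
  rw [parkList_eq_some_of_parkListSeq_eq_some (fun q hq => hy q.2 (List.of_mem_zip hq).2) hF]
  rfl

theorem parkList_induction {P : Finset ℕ → Prop} :
    ∀ {L : List (ℕ × ℕ)} {occ F : Finset ℕ},
      (∀ q ∈ L, ∀ o o', P o → parkOne m o q.1 q.2 = some o' → P o') →
      P occ → parkList m L occ = some F → P F
  | [], _, _, _, h0, h => Option.some_injective _ h ▸ h0
  | q :: L, _, _, hstep, h0, h => by
    obtain ⟨occ', hq, hL⟩ := Option.bind_eq_some_iff.mp h
    exact parkList_induction (fun q' hq' => hstep q' (List.mem_cons_of_mem q hq'))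
      (hstep q List.mem_cons_self _ _ h0 hq) hL

theorem card_of_parkList_eq_some :
    ∀ {L : List (ℕ × ℕ)} {occ F : Finset ℕ},
      parkList m L occ = some F → F.card = occ.card + (L.map Prod.snd).sum
  | [], _, _, h => by simp [← Option.some_injective _ h]
  | q :: L, _, _, h => by
    obtain ⟨occ', hq, hL⟩ := Option.bind_eq_some_iff.mp h
    rw [card_of_parkList_eq_some hL, card_of_parkOne_eq_some hq, List.map_cons, List.sum_cons,
      add_assoc]

theorem eq_Icc_of_parkList_eq_some {L : List (ℕ × ℕ)} {F : Finset ℕ}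
    (hL : ∀ q ∈ L, 1 ≤ q.1) (hsum : (L.map Prod.snd).sum = m)
    (h : parkList m L ∅ = some F) : F = Icc 1 m := by
  have hsub : F ⊆ Icc 1 m := parkList_induction (P := (· ⊆ Icc 1 m))
    (fun q hq _ _ ho => subset_Icc_of_parkOne_eq_some (hL q hq) ho) (empty_subset _) h
  refine eq_of_subset_of_card_le hsub ?_
  rw [card_of_parkList_eq_some h, hsum, card_empty, zero_add, Nat.card_Icc, Nat.add_sub_cancel]

end CarList

theorem exists_eq_mul_add_one_of_mem_PAinv {c n : ℕ} (hc : 0 < c) {x : List ℕ}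
    (hx : x ∈ PAinv (List.replicate n c)) {p : ℕ} (hp : p ∈ x) : ∃ t, p = t * c + 1 := by
  obtain ⟨hlen, hbound, hsome⟩ := hx _ (List.perm_cons_erase hp).symm
  obtain ⟨F, hF⟩ := Option.isSome_iff_exists.mp hsome
  set m := (List.replicate n c).sum
  have hfull : F = Icc 1 m := eq_Icc_of_parkList_eq_some
    (fun q hq => (hbound q.1 (List.of_mem_zip hq).1).1) (by rw [List.map_snd_zip hlen.ge]) hF
  obtain ⟨hp1, hpm⟩ := hbound p List.mem_cons_self
  obtain ⟨n, rfl⟩ : ∃ n', n = n' + 1 :=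
    Nat.exists_eq_add_one.mpr (by simp only [List.length_cons, List.length_replicate] at hlen; lia)
  rw [List.replicate_succ, List.zip_cons_cons, parkList] at hF
  obtain ⟨occ, hfirst, hrest⟩ := Option.bind_eq_some_iff.mp hF
  dsimp only at hfirst
  obtain ⟨j, hj, rfl⟩ := parkOne_eq_some_iff.mp hfirst
  obtain rfl : j = p :=
    le_antisymm (hj.2 ⟨le_rfl, by have := hj.1.1; have := hj.1.2.1; omega, by simp⟩) hj.1.1
  have hempty : Ico j (j + c) ∩ Iio j = ∅ := by
    ext k
    simp only [mem_inter, mem_Ico, mem_Iio, notMem_empty, iff_false]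
    omega
  obtain ⟨-, hdvd⟩ := parkList_induction (P := fun o => j ∈ o ∧ c ∣ (o ∩ Iio j).card)
    (fun q hq o o' ho h => by
      rw [List.eq_of_mem_replicate (List.of_mem_zip hq).2] at h
      exact ⟨subset_of_parkOne_eq_some h ho.1, dvd_card_inter_Iio_of_parkOne_eq_some ho.1 ho.2 h⟩)
    ⟨by simp [hc], by simp [hempty]⟩ hrest
  have hbelow : F ∩ Iio j = Ico 1 j := by
    ext k
    simp only [hfull, mem_inter, mem_Icc, mem_Iio, mem_Ico]
    omega
  obtain ⟨t, ht⟩ : c ∣ j - 1 := by rwa [hbelow, Nat.card_Ico] at hdvd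
  exact ⟨t, by rw [Nat.mul_comm]; omega⟩

def slot (c t : ℕ) : Finset ℕ := Ico (t * c + 1) (t * c + 1 + c)

theorem mem_slot_iff {c t k : ℕ} (hc : 0 < c) : k ∈ slot c t ↔ 1 ≤ k ∧ (k - 1) / c = t := by
  rw [slot, mem_Ico, Nat.div_eq_iff hc]
  omega

def RespectsSlots (c : ℕ) (occ : Finset ℕ) : Prop :=
  ∀ t, slot c t ⊆ occ ∨ Disjoint (slot c t) occ

namespace RespectsSlots

variable {c m : ℕ} {occ : Finset ℕ}

theorem empty : RespectsSlots c ∅ := fun _ => Or.inr (disjoint_empty_right _)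

theorem notMem_of_mem_slot (hocc : RespectsSlots c occ) {t k k' : ℕ} (hk : k ∈ slot c t)
    (hk' : k' ∈ slot c t) (h : k ∉ occ) : k' ∉ occ :=
  (hocc t).elim (fun hsub => absurd (hsub hk) h) (fun hdisj => disjoint_left.mp hdisj hk')

theorem union_slot (hc : 0 < c) (hocc : RespectsSlots c occ) (s : ℕ) :
    RespectsSlots c (occ ∪ slot c s) := by
  intro t
  obtain rfl | hts := eq_or_ne t s
  · exact Or.inl subset_union_right
  · refine (hocc t).imp (fun h => h.trans subset_union_left)
      fun h => disjoint_union_right.mpr ⟨h, disjoint_left.mpr fun k hk hk' => hts ?_⟩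
    rw [← ((mem_slot_iff hc).mp hk).2, ((mem_slot_iff hc).mp hk').2]

theorem exists_slot_of_isLeast_free (hc : 0 < c) (hm : c ∣ m) (hocc : RespectsSlots c occ)
    {t j : ℕ} (hj : IsLeast {j | t * c + 1 ≤ j ∧ j ≤ m ∧ j ∉ occ} j) :
    ∃ s, j = s * c + 1 ∧ j + c ≤ m + 1 ∧ Disjoint (slot c s) occ := by
  obtain ⟨⟨htj, hjm, hjocc⟩, hmin⟩ := hj
  set s := (j - 1) / c
  have hjs : j ∈ slot c s := (mem_slot_iff hc).mpr ⟨by omega, rfl⟩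
  have hstart : s * c + 1 ∈ slot c s := by
    rw [slot, mem_Ico]
    omega
  have hts : t * c ≤ s * c := Nat.mul_le_mul_right c ((Nat.le_div_iff_mul_le hc).mpr (by omega))
  have hjs' : j = s * c + 1 :=
    le_antisymm (hmin ⟨by omega, by rw [slot, mem_Ico] at hjs; omega,
      hocc.notMem_of_mem_slot hjs hstart hjocc⟩) (mem_Ico.mp hjs).1
  obtain ⟨u, rfl⟩ := hm
  have hsu : s * c + c ≤ c * u := by
    rw [Nat.mul_comm c u, ← Nat.succ_mul]
    exact Nat.mul_le_mul_right c
      (Nat.lt_of_mul_lt_mul_right (a := c) (by rw [Nat.mul_comm u]; omega))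
  refine ⟨s, hjs', by omega,
    disjoint_left.mpr fun k hk => hocc.notMem_of_mem_slot hjs hk hjocc⟩

theorem parkOneSeq_eq_parkOne (hc : 0 < c) (hm : c ∣ m) (hocc : RespectsSlots c occ) (t : ℕ) :
    parkOneSeq m occ (t * c + 1) c = parkOne m occ (t * c + 1) c :=
  _root_.parkOneSeq_eq_parkOne hc fun _ hj => by
    obtain ⟨s, rfl, hjm, hdisj⟩ := hocc.exists_slot_of_isLeast_free hc hm hj
    exact ⟨hjm, fun k hk => disjoint_left.mp hdisj hk⟩

theorem of_parkOneSeq_eq_some (hc : 0 < c) (hm : c ∣ m) (hocc : RespectsSlots c occ)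
    {t : ℕ} {occ' : Finset ℕ} (h : parkOneSeq m occ (t * c + 1) c = some occ') :
    RespectsSlots c occ' := by
  obtain ⟨j, hj, -, -, rfl⟩ := parkOneSeq_eq_some_iff.mp h
  obtain ⟨s, rfl, -, -⟩ := hocc.exists_slot_of_isLeast_free hc hm hj
  exact hocc.union_slot hc s

end RespectsSlots

theorem parkListSeq_eq_parkList {c m : ℕ} (hc : 0 < c) (hm : c ∣ m) :
    ∀ {L : List (ℕ × ℕ)} {occ : Finset ℕ}, (∀ q ∈ L, q.2 = c ∧ ∃ t, q.1 = t * c + 1) →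
      RespectsSlots c occ → parkListSeq m L occ = parkList m L occ
  | [], _, _, _ => rfl
  | q :: L, occ, hL, hocc => by
    obtain ⟨hq2, t, hq1⟩ := hL q List.mem_cons_self
    rw [parkListSeq, parkList, hq1, hq2, ← hocc.parkOneSeq_eq_parkOne hc hm t]
    cases h : parkOneSeq m occ (t * c + 1) c with
    | none => rfl
    | some occ' =>
      exact parkListSeq_eq_parkList hc hm (fun q' hq' => hL q' (List.mem_cons_of_mem q hq'))
        (hocc.of_parkOneSeq_eq_some hc hm h)

theorem IsPA.isPS_replicate {c n : ℕ} (hc : 0 < c) {x : List ℕ}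
    (hx : IsPA (List.replicate n c) x) (hstart : ∀ p ∈ x, ∃ t, p = t * c + 1) :
    IsPS (List.replicate n c) x := by
  obtain ⟨hlen, hbound, hpark⟩ := hx
  refine ⟨hlen, hbound, ?_⟩
  rwa [parkListSeq_eq_parkList hc (by simp)
    (fun q hq => ⟨List.eq_of_mem_replicate (List.of_mem_zip hq).2,
      hstart _ (List.of_mem_zip hq).1⟩) RespectsSlots.empty]

theorem stmt4_general (c n : ℕ) (hc : 0 < c) :
    PSinv (List.replicate n c) = PAinv (List.replicate n c) := by
  ext x
  constructor
  · intro hx x' hx'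
    exact (hx x' hx').isPA fun l hl => (List.eq_of_mem_replicate hl).symm ▸ hc
  · intro hx x' hx'
    exact (hx x' hx').isPS_replicate hc fun p hp =>
      exists_eq_mul_add_one_of_mem_PAinv hc hx (hx'.subset hp)

theorem stmt4 (c n : ℕ) (hc : 0 < c) (hn : 0 < n) :
    PSinv (List.replicate n c) = PAinv (List.replicate n c) :=
  stmt4_general c n hc
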